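/- arXiv:0809.1960 — 2 statements merged into one kernel-verified Lean document; each statement's English description precedes it below -/
import Mathlib

section
/- Every cube tiling of ℝ³ contains a column; that is, if T ⊆ ℝ³ determines a cube tiling of ℝ³, then there exist s ∈ ℝ³ and a standard basis vector eᵢ of ℝ³ such that s + k·eᵢ ∈ T for every k ∈ ℤ. -/
/-!
The tiles met by a line `x + ℝ eᵢ`, approached from a fixed side in each other coordinate, are
less than `1` apart off direction `i`, so their `i`-intervals tile `ℝ` and their `i`-coordinates
form a coset of `ℤ`. If the stacks approached from the two sides of coordinate `k` lie in
different cosets, no tile belongs to both, and all their tiles share the same `k`-coordinate.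

A stack that is not a column has two consecutive tiles `A`, `B` differing in a transverse
coordinate `i`; the stacks in direction `i` through the corner `A ⊔ B`, one containing `A` and the
other `B`, are out of phase and hence rigid in the direction of the step. After two such steps,
four stacks through one point leave one of them rigid in both transverse coordinates, that is,
a column.
-/

/-- The half-open unit cube `[0,1)ⁿ` translated by `t`. -/
def Cube {n : ℕ} (t : Fin n → ℝ) : Set (Fin n → ℝ) :=
  {x | ∀ j, t j ≤ x j ∧ x j < t j + 1}

/-- `T` determines a cube tiling of `ℝⁿ`: the cubes `[0,1)ⁿ + t`, `t ∈ T`,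
are pairwise disjoint and their union is all of `ℝⁿ`. -/
def IsCubeTiling {n : ℕ} (T : Set (Fin n → ℝ)) : Prop :=
  (∀ s ∈ T, ∀ t ∈ T, s ≠ t → Disjoint (Cube s) (Cube t)) ∧
  (⋃ t ∈ T, Cube t) = Set.univ

/-- `T ⊆ ℝ` determines a tiling of `ℝ` by unit intervals `[0,1) + t`. -/
def IsCubeTiling1 (T : Set ℝ) : Prop :=
  (∀ s ∈ T, ∀ t ∈ T, s ≠ t → Disjoint (Set.Ico s (s + 1)) (Set.Ico t (t + 1))) ∧
  (⋃ t ∈ T, Set.Ico t (t + 1)) = Set.univ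

/-- The tiling determined by `T` contains a column: there are `s ∈ ℝⁿ` and a
standard basis vector `eᵢ` such that `s + k·eᵢ ∈ T` for every `k ∈ ℤ`. -/
def ContainsColumn {n : ℕ} (T : Set (Fin n → ℝ)) : Prop :=
  ∃ s : Fin n → ℝ, ∃ i : Fin n, ∀ k : ℤ, (s + (k : ℝ) • (Pi.single i 1 : Fin n → ℝ)) ∈ T

/-- A natural code of `ℝⁿ`: each `ε j : ℝ → ℕ⁺` restricts to a bijection from
every coset `x + ℤ` onto the positive integers. -/
def IsNaturalCode {n : ℕ} (ε : Fin n → ℝ → ℕ+) : Prop :=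
  ∀ j : Fin n, ∀ x : ℝ, Set.BijOn (ε j) {y : ℝ | ∃ m : ℤ, y = x + m} Set.univ

open Set

theorem ne_add_int_of_abs_sub_lt_one {a b : ℝ} (hab : |a - b| < 1) (hne : a ≠ b) (m : ℤ) :
    a ≠ b + m := by
  rintro rfl
  rw [add_sub_cancel_left] at hab
  have : m = 0 := Int.abs_lt_one_iff.mp (by exact_mod_cast hab)
  simp [this] at hne

namespace IsCubeTiling1

variable {A : Set ℝ} {a b : ℝ}

theorem exists_mem (hA : IsCubeTiling1 A) (y : ℝ) : ∃ a ∈ A, y ∈ Ico a (a + 1) := by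
  have hy : y ∈ ⋃ a ∈ A, Ico a (a + 1) := hA.2 ▸ mem_univ y
  obtain ⟨a, ha, hya⟩ := mem_iUnion₂.mp hy
  exact ⟨a, ha, hya⟩

theorem eq_of_abs_sub_lt_one (hA : IsCubeTiling1 A) (ha : a ∈ A) (hb : b ∈ A)
    (hab : |a - b| < 1) : a = b := by
  by_contra hne
  obtain ⟨h₁, h₂⟩ := abs_sub_lt_iff.mp hab
  exact disjoint_left.mp (hA.1 a ha b hb hne)
    ⟨le_max_left a b, max_lt (by linarith) (by linarith)⟩
    ⟨le_max_right a b, max_lt (by linarith) (by linarith)⟩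

theorem add_one_mem (hA : IsCubeTiling1 A) (ha : a ∈ A) : a + 1 ∈ A := by
  obtain ⟨b, hb, hb₁, hb₂⟩ := hA.exists_mem (a + 1)
  rcases hb₁.lt_or_eq with hlt | rfl
  · have := hA.eq_of_abs_sub_lt_one hb ha (abs_sub_lt_iff.mpr ⟨by linarith, by linarith⟩)
    linarith
  · exact hb

theorem sub_one_mem (hA : IsCubeTiling1 A) (ha : a ∈ A) : a - 1 ∈ A := by
  obtain ⟨b, hb, hb₁, hb₂⟩ := hA.exists_mem (a - 1)
  have : b + 1 = a := hA.eq_of_abs_sub_lt_one (hA.add_one_mem hb) ha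
    (abs_sub_lt_iff.mpr ⟨by linarith, by linarith⟩)
  rwa [← this, add_sub_cancel_right]

theorem add_int_mem (hA : IsCubeTiling1 A) (ha : a ∈ A) (m : ℤ) : a + m ∈ A := by
  induction m using Int.induction_on with
  | zero => simpa using ha
  | succ m ih => simpa [add_assoc] using hA.add_one_mem ih
  | pred m ih => simpa [sub_eq_add_neg, add_assoc] using hA.sub_one_mem ih

theorem exists_int_eq_add (hA : IsCubeTiling1 A) (ha : a ∈ A) (hb : b ∈ A) :
    ∃ m : ℤ, b = a + m := by
  refine ⟨⌊b - a⌋, hA.eq_of_abs_sub_lt_one hb (hA.add_int_mem ha _) ?_⟩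
  have h₁ := Int.floor_le (b - a)
  have h₂ := Int.lt_floor_add_one (b - a)
  exact abs_sub_lt_iff.mpr ⟨by linarith, by linarith⟩

theorem exists_mem_Ioc (hA : IsCubeTiling1 A) (y : ℝ) : ∃ a ∈ A, y ∈ Ioc a (a + 1) := by
  obtain ⟨a, ha, h₁, h₂⟩ := hA.exists_mem y
  rcases h₁.lt_or_eq with hlt | rfl
  · exact ⟨a, ha, hlt, h₂.le⟩
  · exact ⟨a - 1, hA.sub_one_mem ha, by simp, by simp⟩

end IsCubeTiling1

/-- The tiles crossing the line `x + ℝ eᵢ`, where in the coordinates `l ∈ S` the tile is taken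
closed at its upper face instead of its lower one: the tiles met by the line
`x - δ ∑_{l ∈ S} e_l + ℝ eᵢ` for all small `δ > 0`. -/
def lineTiles {n : ℕ} (T : Set (Fin n → ℝ)) (i : Fin n) (x : Fin n → ℝ) (S : Finset (Fin n)) :
    Set (Fin n → ℝ) :=
  {t | t ∈ T ∧ ∀ l ≠ i,
    if l ∈ S then x l ∈ Ioc (t l) (t l + 1) else x l ∈ Ico (t l) (t l + 1)}

section lineTiles

variable {n : ℕ} {T : Set (Fin n → ℝ)} {i k l : Fin n} {x : Fin n → ℝ} {S : Finset (Fin n)}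
  {t u v : Fin n → ℝ}

theorem lineTiles_erase_self (T : Set (Fin n → ℝ)) (i : Fin n) (x : Fin n → ℝ)
    (S : Finset (Fin n)) : lineTiles T i x (S.erase i) = lineTiles T i x S := by
  ext t
  simp +contextual [lineTiles, Finset.mem_erase]

theorem abs_sub_lt_one_of_mem_lineTiles (hu : u ∈ lineTiles T i x S)
    (hv : v ∈ lineTiles T i x S) (hl : l ≠ i) : |u l - v l| < 1 := by
  have hu' := hu.2 l hl
  have hv' := hv.2 l hl
  split_ifs at hu' hv' <;>
    exact abs_sub_lt_iff.mpr ⟨by linarith [hu'.1, hu'.2, hv'.1, hv'.2],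
      by linarith [hu'.1, hu'.2, hv'.1, hv'.2]⟩

theorem mem_lineTiles_insert_iff (hki : k ≠ i) (hkS : k ∉ S) (hx : x k ∈ Ioo (u k) (u k + 1)) :
    u ∈ lineTiles T i x (insert k S) ↔ u ∈ lineTiles T i x S := by
  refine and_congr_right fun _ => forall₂_congr fun l hl => ?_
  by_cases hlk : l = k
  · subst hlk
    simp [hkS, hx.1, hx.2, hx.1.le, hx.2.le]
  · simp [hlk]

theorem mem_lineTiles_sup {A B : Fin n → ℝ} (hA : A ∈ T) (hB : B ∈ T) (hAB : B k = A k + 1)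
    (hclose : ∀ l ≠ k, |A l - B l| < 1) (i : Fin n) :
    A ∈ lineTiles T i (A ⊔ B) {k} ∧ B ∈ lineTiles T i (A ⊔ B) ∅ := by
  refine ⟨⟨hA, fun l _ => ?_⟩, ⟨hB, fun l _ => ?_⟩⟩ <;> by_cases hlk : l = k
  · subst hlk
    simp [hAB]
  · have h := abs_sub_lt_iff.mp (hclose l hlk)
    simp only [Finset.mem_singleton, hlk, if_false, Pi.sup_apply]
    exact ⟨le_sup_left, max_lt (by linarith) (by linarith)⟩
  · subst hlk
    simp [hAB]
  · have h := abs_sub_lt_iff.mp (hclose l hlk)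
    simp only [Finset.notMem_empty, if_false, Pi.sup_apply]
    exact ⟨le_sup_right, max_lt (by linarith) (by linarith)⟩

theorem mem_lineTiles_update {j : Fin n} {S' : Finset (Fin n)} {y : ℝ}
    (ht : t ∈ lineTiles T j x S') (hS : ∀ l ≠ j, l ≠ k → (l ∈ S ↔ l ∈ S'))
    (hy : if j ∈ S then y ∈ Ioc (t j) (t j + 1) else y ∈ Ico (t j) (t j + 1)) :
    t ∈ lineTiles T k (Function.update x j y) S := by
  refine ⟨ht.1, fun l hlk => ?_⟩
  by_cases hlj : l = j
  · subst hlj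
    simpa using hy
  · simpa [hlj, hS l hlj hlk] using ht.2 l hlj

end lineTiles

namespace IsCubeTiling

variable {n : ℕ} {T : Set (Fin n → ℝ)} {i k : Fin n} {x : Fin n → ℝ} {S : Finset (Fin n)}
  {s t u v : Fin n → ℝ}

theorem exists_mem_cube (hT : IsCubeTiling T) (x : Fin n → ℝ) : ∃ t ∈ T, x ∈ Cube t := by
  have hx : x ∈ ⋃ t ∈ T, Cube t := hT.2 ▸ mem_univ x
  obtain ⟨t, ht, hxt⟩ := mem_iUnion₂.mp hx
  exact ⟨t, ht, hxt⟩

theorem eq_of_abs_sub_lt_one (hT : IsCubeTiling T) (hs : s ∈ T) (ht : t ∈ T)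
    (hst : ∀ l, |s l - t l| < 1) : s = t := by
  by_contra hne
  have h := fun l => abs_sub_lt_iff.mp (hst l)
  refine disjoint_left.mp (hT.1 s hs t ht hne) (show s ⊔ t ∈ Cube s from fun l => ?_)
    (show s ⊔ t ∈ Cube t from fun l => ?_) <;> simp only [Pi.sup_apply] <;> specialize h l
  · exact ⟨le_sup_left, max_lt (by linarith) (by linarith)⟩
  · exact ⟨le_sup_right, max_lt (by linarith) (by linarith)⟩

theorem isCubeTiling1_image_lineTiles_of_forall_exists (hT : IsCubeTiling T)
    (hcov : ∀ y, ∃ t ∈ lineTiles T i x S, y ∈ Ico (t i) (t i + 1)) :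
    IsCubeTiling1 ((· i) '' lineTiles T i x S) := by
  refine ⟨?_, eq_univ_of_forall fun y => ?_⟩
  · rintro _ ⟨u, hu, rfl⟩ _ ⟨v, hv, rfl⟩ hne
    refine disjoint_left.mpr fun z hzu hzv => hne (congrFun ?_ i)
    refine hT.eq_of_abs_sub_lt_one hu.1 hv.1 fun l => ?_
    by_cases hl : l = i
    · subst hl
      exact abs_sub_lt_iff.mpr ⟨by linarith [hzu.1, hzv.2], by linarith [hzu.2, hzv.1]⟩
    · exact abs_sub_lt_one_of_mem_lineTiles hu hv hl
  · obtain ⟨t, ht, hyt⟩ := hcov y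
    exact mem_iUnion₂.mpr ⟨t i, ⟨t, ht, rfl⟩, hyt⟩

/-- A tile of `lineTiles T i x (insert j S)` over `y` is found in the stack
`lineTiles T j (update x i y) S`, as its tile whose `j`-interval has `x j` in its upper end. -/
theorem exists_mem_lineTiles (hT : IsCubeTiling T) (i : Fin n) (x : Fin n → ℝ)
    (S : Finset (Fin n)) (y : ℝ) : ∃ t ∈ lineTiles T i x S, y ∈ Ico (t i) (t i + 1) := by
  rw [← lineTiles_erase_self]
  suffices h : ∀ S : Finset (Fin n), ∀ i x y, i ∉ S →
      ∃ t ∈ lineTiles T i x S, y ∈ Ico (t i) (t i + 1) from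
    h _ i x y (Finset.notMem_erase i S)
  intro S
  induction S using Finset.induction_on with
  | empty =>
    intro i x y _
    obtain ⟨t, ht, hxt⟩ := hT.exists_mem_cube (Function.update x i y)
    refine ⟨t, ⟨ht, fun l hl => ?_⟩, by simpa using hxt i⟩
    simpa [hl] using hxt l
  | insert j S hjS ih =>
    intro i x y hi
    obtain ⟨hij, hiS⟩ := not_or.mp (Finset.mem_insert.not.mp hi)
    obtain ⟨_, ⟨t, ht, rfl⟩, htj⟩ :=
      (hT.isCubeTiling1_image_lineTiles_of_forall_exists
        (ih j (Function.update x i y) · hjS)).exists_mem_Ioc (x j)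
    refine ⟨t, ⟨ht.1, fun l hl => ?_⟩, by simpa [hiS] using ht.2 i hij⟩
    by_cases hlj : l = j
    · subst hlj
      simpa using htj
    · simpa [hl, hlj] using ht.2 l hlj

theorem isCubeTiling1_image_lineTiles (hT : IsCubeTiling T) :
    IsCubeTiling1 ((· i) '' lineTiles T i x S) :=
  hT.isCubeTiling1_image_lineTiles_of_forall_exists (hT.exists_mem_lineTiles i x S)

theorem exists_mem_lineTiles_eq_add_int (hT : IsCubeTiling T) (ht : t ∈ lineTiles T i x S)
    (m : ℤ) : ∃ u ∈ lineTiles T i x S, u i = t i + m := by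
  obtain ⟨u, hu, hui⟩ := hT.isCubeTiling1_image_lineTiles.add_int_mem ⟨t, ht, rfl⟩ m
  exact ⟨u, hu, hui⟩

theorem exists_int_eq_add_of_mem_lineTiles (hT : IsCubeTiling T) (hu : u ∈ lineTiles T i x S)
    (hv : v ∈ lineTiles T i x S) : ∃ m : ℤ, v i = u i + m :=
  hT.isCubeTiling1_image_lineTiles.exists_int_eq_add ⟨u, hu, rfl⟩ ⟨v, hv, rfl⟩

theorem exists_mem_lineTiles_mem_Ioo (hT : IsCubeTiling T) (hv : v ∈ lineTiles T i x S) {y : ℝ}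
    (hy : ∀ m : ℤ, y ≠ v i + m) : ∃ u ∈ lineTiles T i x S, y ∈ Ioo (u i) (u i + 1) := by
  obtain ⟨u, hu, hyu₁, hyu₂⟩ := hT.exists_mem_lineTiles i x S y
  obtain ⟨m, hm⟩ := hT.exists_int_eq_add_of_mem_lineTiles hv hu
  exact ⟨u, hu, hyu₁.lt_of_ne fun h => hy m (h ▸ hm), hyu₂⟩

/-- No tile lies in both stacks, as it would put them in phase; so `x k` is an endpoint of the
`k`-interval of every tile of either stack. -/
theorem lineTiles_coord_eq_of_forall_ne_add_int (hT : IsCubeTiling T) (hki : k ≠ i) (hkS : k ∉ S)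
    (hs : s ∈ lineTiles T i x S) (ht : t ∈ lineTiles T i x (insert k S))
    (hst : ∀ m : ℤ, t i ≠ s i + m) :
    (∀ u ∈ lineTiles T i x S, u k = x k) ∧ (∀ u ∈ lineTiles T i x (insert k S), u k + 1 = x k) := by
  have hboth : ∀ u ∈ lineTiles T i x S, x k ∉ Ioo (u k) (u k + 1) := fun u hu hxu => by
    obtain ⟨m, hm⟩ := hT.exists_int_eq_add_of_mem_lineTiles hs hu
    obtain ⟨m', hm'⟩ :=
      hT.exists_int_eq_add_of_mem_lineTiles ht ((mem_lineTiles_insert_iff hki hkS hxu).mpr hu)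
    exact hst (m - m') (by push_cast; linarith)
  constructor
  · intro u hu
    have hxu := hu.2 k hki
    rw [if_neg hkS] at hxu
    by_contra hne
    exact hboth u hu ⟨hxu.1.lt_of_ne hne, hxu.2⟩
  · intro u hu
    have hxu := hu.2 k hki
    rw [if_pos (Finset.mem_insert_self k S)] at hxu
    by_contra hne
    exact hboth u ((mem_lineTiles_insert_iff hki hkS ⟨hxu.1, hxu.2.lt_of_ne' hne⟩).mp hu)
      ⟨hxu.1, hxu.2.lt_of_ne' hne⟩

theorem containsColumn_of_forall_eq (hT : IsCubeTiling T) (ht : t ∈ lineTiles T i x S)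
    (hrigid : ∀ u ∈ lineTiles T i x S, ∀ l ≠ i, u l = t l) : ContainsColumn T := by
  refine ⟨t, i, fun m => ?_⟩
  obtain ⟨u, hu, hui⟩ := hT.exists_mem_lineTiles_eq_add_int ht m
  convert hu.1 using 1
  funext l
  by_cases hl : l = i
  · subst hl
    simp [hui]
  · simp [hl, hrigid u hu l hl]

theorem containsColumn_or_exists_step (hT : IsCubeTiling T) (ht : t ∈ lineTiles T i x S) :
    ContainsColumn T ∨ ∃ u ∈ lineTiles T i x S, ∃ v ∈ lineTiles T i x S,
      v i = u i + 1 ∧ ∃ l ≠ i, u l ≠ v l := by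
  refine or_iff_not_imp_right.mpr fun hstep => hT.containsColumn_of_forall_eq ht ?_
  push Not at hstep
  suffices h : ∀ m : ℤ, ∀ u ∈ lineTiles T i x S, u i = t i + m → ∀ l ≠ i, u l = t l by
    intro u hu
    obtain ⟨m, hm⟩ := hT.exists_int_eq_add_of_mem_lineTiles ht hu
    exact h m u hu hm
  intro m
  induction m using Int.induction_on with
  | zero =>
    intro u hu hui l _
    refine congrFun (hT.eq_of_abs_sub_lt_one hu.1 ht.1 fun l => ?_) l
    by_cases hl : l = i
    · simp [hl, hui]
    · exact abs_sub_lt_one_of_mem_lineTiles hu ht hl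
  | succ m ih =>
    intro u hu hui l hl
    obtain ⟨v, hv, hvi⟩ := hT.exists_mem_lineTiles_eq_add_int hu (-1)
    rw [← hstep v hv u hu (by push_cast at hvi hui ⊢; linarith) l hl]
    exact ih v hv (by push_cast at hvi hui ⊢; linarith) l hl
  | pred m ih =>
    intro u hu hui l hl
    obtain ⟨v, hv, hvi⟩ := hT.exists_mem_lineTiles_eq_add_int hu 1
    rw [hstep u hu v hv (by push_cast at hvi; linarith) l hl]
    exact ih v hv (by push_cast at hvi hui ⊢; linarith) l hl

end IsCubeTiling

theorem fin3_eq_or_eq_or_eq {i j k : Fin 3} (hij : i ≠ j) (hik : i ≠ k) (hjk : j ≠ k) (l : Fin 3) :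
    l = i ∨ l = j ∨ l = k := by
  revert i j k l
  decide

theorem fin3_exists_ne_ne (i k : Fin 3) : ∃ j, j ≠ i ∧ j ≠ k := by
  revert i k
  decide

namespace IsCubeTiling

variable {T : Set (Fin 3 → ℝ)} {i j k : Fin 3}

theorem containsColumn_or_exists_adjacent (hT : IsCubeTiling T) (hij : i ≠ j) (hik : i ≠ k)
    (hjk : j ≠ k) {A B : Fin 3 → ℝ} (hA : A ∈ T) (hB : B ∈ T) (hAB : B k = A k + 1)
    (hAi : A i ≠ B i) (hclose : ∀ l ≠ k, |A l - B l| < 1) :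
    ContainsColumn T ∨ ∃ V ∈ lineTiles T i (A ⊔ B) ∅, ∃ V' ∈ lineTiles T i (A ⊔ B) ∅,
      V' i = V i + 1 ∧ V j ≠ V' j ∧ V k = V' k := by
  obtain ⟨hAx, hBx⟩ := mem_lineTiles_sup hA hB hAB hclose i
  have hrigid := (hT.lineTiles_coord_eq_of_forall_ne_add_int hik.symm (Finset.notMem_empty k)
    hBx hAx (ne_add_int_of_abs_sub_lt_one (hclose i hik) hAi)).1
  refine (hT.containsColumn_or_exists_step hBx).imp_right ?_
  rintro ⟨V, hV, V', hV', hVV', l, hli, hl⟩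
  have hVk : V k = V' k := by rw [hrigid V hV, hrigid V' hV']
  rcases fin3_eq_or_eq_or_eq hij hik hjk l with rfl | rfl | rfl
  · exact absurd rfl hli
  · exact ⟨V, hV, V', hV', hVV', hl, hVk⟩
  · exact absurd hVk hl

/-- Through `w := update x j (Q j)` run four stacks in direction `k`, with sides `∅ ∋ Q`,
`{j} ∋ P`, `{i} ∋ U` and `{i, j} ∋ U`. Since `P k` and `Q k` are out of phase, `U k` is out of
phase with one of them, and the stack of that tile is then rigid in both `i` and `j`. -/
theorem containsColumn_of_adjacent_of_mem_Ioo (hT : IsCubeTiling T) (hij : i ≠ j) (hik : i ≠ k)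
    (hjk : j ≠ k) {x P Q U : Fin 3 → ℝ} (hP : P ∈ lineTiles T j x ∅)
    (hQ : Q ∈ lineTiles T j x ∅) (hPQ : Q j = P j + 1) (hPQk : P k ≠ Q k)
    (hU : U ∈ lineTiles T j x {i}) (hQU : Q j ∈ Ioo (U j) (U j + 1)) : ContainsColumn T := by
  set w := Function.update x j (Q j)
  have hQw : Q ∈ lineTiles T k w ∅ := mem_lineTiles_update hQ (by simp) (by simp)
  have hPw : P ∈ lineTiles T k w {j} :=
    mem_lineTiles_update hP (by simp +contextual) (by simp [hPQ])
  have hUw : U ∈ lineTiles T k w {i} :=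
    mem_lineTiles_update hU (by simp) (by simp [hij.symm, hQU.1.le, hQU.2])
  have hUw' : U ∈ lineTiles T k w {i, j} :=
    mem_lineTiles_update hU (by simp +contextual) (by simp [hQU.1, hQU.2.le])
  have hPQ' := ne_add_int_of_abs_sub_lt_one (abs_sub_lt_one_of_mem_lineTiles hP hQ hjk.symm) hPQk
  have hUQ : |U k - Q k| < 1 := by
    have hUk := hU.2 k hjk.symm
    have hQk := hQ.2 k hjk.symm
    simp only [Finset.mem_singleton, hik.symm, Finset.notMem_empty, if_false] at hUk hQk
    exact abs_sub_lt_iff.mpr ⟨by linarith [hUk.1, hQk.2], by linarith [hUk.2, hQk.1]⟩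
  by_cases hUQk : U k = Q k
  · have hi := (hT.lineTiles_coord_eq_of_forall_ne_add_int hik (by simpa using hij) hPw hUw'
      (ne_add_int_of_abs_sub_lt_one (hUQk ▸ abs_sub_lt_one_of_mem_lineTiles hQ hP hjk.symm)
        (hUQk ▸ hPQk.symm))).1
    have hj := (hT.lineTiles_coord_eq_of_forall_ne_add_int hjk (Finset.notMem_empty j)
      hQw hPw hPQ').2
    refine hT.containsColumn_of_forall_eq hPw fun u hu l hl => ?_
    rcases fin3_eq_or_eq_or_eq hij hik hjk l with rfl | rfl | rfl
    · rw [hi u hu, hi P hPw]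
    · linarith [hj u hu, hj P hPw]
    · exact absurd rfl hl
  · have hi := (hT.lineTiles_coord_eq_of_forall_ne_add_int hik (Finset.notMem_empty i) hQw hUw
      (ne_add_int_of_abs_sub_lt_one hUQ hUQk)).1
    have hj := (hT.lineTiles_coord_eq_of_forall_ne_add_int hjk (Finset.notMem_empty j)
      hQw hPw hPQ').1
    refine hT.containsColumn_of_forall_eq hQw fun u hu l hl => ?_
    rcases fin3_eq_or_eq_or_eq hij hik hjk l with rfl | rfl | rfl
    · rw [hi u hu, hi Q hQw]
    · rw [hj u hu, hj Q hQw]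
    · exact absurd rfl hl

theorem containsColumn_of_adjacent_of_adjacent (hT : IsCubeTiling T) (hij : i ≠ j)
    (hik : i ≠ k) (hjk : j ≠ k) {V V' P Q : Fin 3 → ℝ} (hV : V ∈ T) (hV' : V' ∈ T)
    (hVV' : V' i = V i + 1) (hVj : V j ≠ V' j) (hclose : ∀ l ≠ i, |V l - V' l| < 1)
    (hP : P ∈ lineTiles T j (V ⊔ V') ∅) (hQ : Q ∈ lineTiles T j (V ⊔ V') ∅)
    (hPQ : Q j = P j + 1) (hPQk : P k ≠ Q k) : ContainsColumn T := by
  obtain ⟨hVx, hV'x⟩ := mem_lineTiles_sup hV hV' hVV' hclose j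
  obtain ⟨m, hm⟩ := hT.exists_int_eq_add_of_mem_lineTiles hV'x hQ
  obtain ⟨U, hU, hQU⟩ := hT.exists_mem_lineTiles_mem_Ioo hVx (y := Q j) fun m' h =>
    ne_add_int_of_abs_sub_lt_one (hclose j hij.symm) hVj (m - m') (by push_cast; linarith)
  exact hT.containsColumn_of_adjacent_of_mem_Ioo hij hik hjk hP hQ hPQ hPQk hU hQU

end IsCubeTiling

/-- Every cube tiling of ℝ^3 contains a column. -/
theorem cube_tiling_dim3_contains_column (T : Set (Fin 3 → ℝ)) (hT : IsCubeTiling T) :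
    ∃ s : Fin 3 → ℝ, ∃ i : Fin 3, ∀ k : ℤ, (s + (k : ℝ) • (Pi.single i 1 : Fin 3 → ℝ)) ∈ T := by
  change ContainsColumn T
  obtain ⟨A₀, hA₀, -⟩ := hT.exists_mem_lineTiles 2 0 ∅ 0
  obtain hcol | ⟨A, hA, B, hB, hAB, i, hi, hABi⟩ := hT.containsColumn_or_exists_step hA₀
  · exact hcol
  obtain ⟨j, hji, hj⟩ := fin3_exists_ne_ne i 2
  obtain hcol | ⟨V, hV, V', hV', hVV', hVj, -⟩ :=
    hT.containsColumn_or_exists_adjacent hji.symm hi hj hA.1 hB.1 hAB hABi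
      fun _ => abs_sub_lt_one_of_mem_lineTiles hA hB
  · exact hcol
  have hVclose : ∀ l ≠ i, |V l - V' l| < 1 := fun _ => abs_sub_lt_one_of_mem_lineTiles hV hV'
  obtain hcol | ⟨P, hP, Q, hQ, hPQ, hPQ2, -⟩ :=
    hT.containsColumn_or_exists_adjacent hj hji hi.symm hV.1 hV'.1 hVV' hVj hVclose
  · exact hcol
  exact hT.containsColumn_of_adjacent_of_adjacent hji.symm hi hj hV.1 hV'.1 hVV' hVj hVclose
    hP hQ hPQ hPQ2
end

section
/- Let n ≥ 2, fix a natural code ε = (ε₁,…,εₙ) : ℝⁿ → ℕⁿ, and let T ⊆ ℝⁿ determine a cube tiling of ℝⁿ. For k ∈ ℕ set Tᵏ = {t ∈ T : εₙ(tₙ) = k}. Then the projection {(t₁,…,t_{n−1}) : t ∈ Tᵏ} of Tᵏ onto the first n−1 coordinates determines a cube tiling of ℝⁿ⁻¹. -/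
/-!
Fix `x ∈ ℝⁿ` and look at the tiles of `T` whose projection contains `x`. Their last coordinates
form a tiling of the line `{x} × ℝ` by unit intervals, and a tiling of `ℝ` by unit intervals is a
single coset `s + ℤ`; distinct such tiles have distinct last coordinates. Since `εₙ` is a
bijection from `s + ℤ` onto the positive integers, exactly one of these tiles has code `k`, i.e.
exactly one cube of the projected slice contains `x`.
-/

lemma disjoint_and_iUnion_eq_univ_iff_existsUnique {α β : Type*} (B : α → Set β) (T : Set α) :
    ((∀ s ∈ T, ∀ t ∈ T, s ≠ t → Disjoint (B s) (B t)) ∧ (⋃ t ∈ T, B t) = Set.univ) ↔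
      ∀ x, ∃! t, t ∈ T ∧ x ∈ B t := by
  constructor
  · rintro ⟨hdisj, hcover⟩ x
    obtain ⟨t, ht, hx⟩ := Set.mem_iUnion₂.mp (hcover ▸ Set.mem_univ x)
    refine ⟨t, ⟨ht, hx⟩, fun s ⟨hs, hxs⟩ => ?_⟩
    by_contra hne
    exact Set.disjoint_left.mp (hdisj s hs t ht hne) hxs hx
  · intro h
    refine ⟨fun s hs t ht hne => Set.disjoint_left.mpr fun x hxs hxt => hne ?_,
      Set.eq_univ_of_forall fun x => ?_⟩
    · exact (h x).unique ⟨hs, hxs⟩ ⟨ht, hxt⟩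
    · obtain ⟨t, ⟨ht, hx⟩, -⟩ := h x
      exact Set.mem_iUnion₂.mpr ⟨t, ht, hx⟩

lemma isCubeTiling_iff {n : ℕ} {T : Set (Fin n → ℝ)} :
    IsCubeTiling T ↔ ∀ x, ∃! t, t ∈ T ∧ x ∈ Cube t :=
  disjoint_and_iUnion_eq_univ_iff_existsUnique Cube T

lemma isCubeTiling1_iff {S : Set ℝ} :
    IsCubeTiling1 S ↔ ∀ y, ∃! c, c ∈ S ∧ y ∈ Set.Ico c (c + 1) :=
  disjoint_and_iUnion_eq_univ_iff_existsUnique (fun c => Set.Ico c (c + 1)) S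

namespace IsCubeTiling1

variable {S : Set ℝ}

lemma exists_mem_s15 (hS : IsCubeTiling1 S) (y : ℝ) : ∃ c ∈ S, c ≤ y ∧ y < c + 1 :=
  let ⟨c, ⟨hc, hy⟩, _⟩ := isCubeTiling1_iff.mp hS y
  ⟨c, hc, hy⟩

lemma eq_of_le_of_lt_add_one (hS : IsCubeTiling1 S) {c d : ℝ} (hc : c ∈ S) (hd : d ∈ S)
    (hcd : c ≤ d) (hdc : d < c + 1) : c = d :=
  (isCubeTiling1_iff.mp hS d).unique ⟨hc, hcd, hdc⟩ ⟨hd, le_rfl, lt_add_one d⟩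

lemma add_one_mem_s15 (hS : IsCubeTiling1 S) {c : ℝ} (hc : c ∈ S) : c + 1 ∈ S := by
  obtain ⟨d, hd, hdc, hcd⟩ := hS.exists_mem_s15 (c + 1)
  obtain rfl | hlt := hdc.eq_or_lt
  · exact hd
  · have := hS.eq_of_le_of_lt_add_one hc hd (by linarith) hlt
    linarith

lemma sub_one_mem_s15 (hS : IsCubeTiling1 S) {c : ℝ} (hc : c ∈ S) : c - 1 ∈ S := by
  obtain ⟨d, hd, hdc, hcd⟩ := hS.exists_mem_s15 (c - 1)
  have : d + 1 = c :=
    hS.eq_of_le_of_lt_add_one (hS.add_one_mem_s15 hd) hc (by linarith) (by linarith)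
  rwa [← this, add_sub_cancel_right]

lemma add_int_mem_s15 (hS : IsCubeTiling1 S) {c : ℝ} (hc : c ∈ S) (m : ℤ) : c + m ∈ S := by
  induction m using Int.induction_on with
  | zero => simpa using hc
  | succ i ih => simpa [← add_assoc] using hS.add_one_mem_s15 ih
  | pred i ih => simpa [← add_sub_assoc] using hS.sub_one_mem_s15 ih

lemma eq_coset (hS : IsCubeTiling1 S) {s : ℝ} (hs : s ∈ S) :
    S = {y | ∃ m : ℤ, y = s + m} := by
  ext c
  refine ⟨fun hc => ⟨⌊c - s⌋, ?_⟩, fun ⟨m, hm⟩ => hm ▸ hS.add_int_mem_s15 hs m⟩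
  exact (hS.eq_of_le_of_lt_add_one (hS.add_int_mem_s15 hs _) hc
    (by linarith [Int.floor_le (c - s)]) (by linarith [Int.lt_floor_add_one (c - s)])).symm

end IsCubeTiling1

lemma snoc_mem_cube_iff {n : ℕ} (t : Fin (n + 1) → ℝ) (x : Fin n → ℝ) (y : ℝ) :
    Fin.snoc x y ∈ Cube t ↔
      x ∈ Cube (Fin.init t) ∧ y ∈ Set.Ico (t (Fin.last n)) (t (Fin.last n) + 1) := by
  refine ⟨fun h => ⟨fun j => by simpa [Fin.init] using h j.castSucc, by simpa using h (Fin.last n)⟩,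
    fun ⟨hx, hy⟩ j => ?_⟩
  induction j using Fin.lastCases with
  | last => simpa using hy
  | cast i => simpa [Fin.init] using hx i

namespace IsCubeTiling

variable {n : ℕ} {T : Set (Fin (n + 1) → ℝ)}

lemma isCubeTiling1_last_image (hT : IsCubeTiling T) (x : Fin n → ℝ) :
    IsCubeTiling1 ((fun t => t (Fin.last n)) '' {t ∈ T | x ∈ Cube (Fin.init t)}) := by
  refine isCubeTiling1_iff.mpr fun y => ?_
  obtain ⟨t, ⟨ht, hxy⟩, huniq⟩ := isCubeTiling_iff.mp hT (Fin.snoc x y)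
  rw [snoc_mem_cube_iff] at hxy
  refine ⟨t (Fin.last n), ⟨⟨t, ⟨ht, hxy.1⟩, rfl⟩, hxy.2⟩, ?_⟩
  rintro _ ⟨⟨t', ⟨ht', hxt'⟩, rfl⟩, hy⟩
  rw [huniq t' ⟨ht', (snoc_mem_cube_iff t' x y).mpr ⟨hxt', hy⟩⟩]

lemma injOn_last (hT : IsCubeTiling T) (x : Fin n → ℝ) :
    Set.InjOn (fun t => t (Fin.last n)) {t ∈ T | x ∈ Cube (Fin.init t)} := by
  rintro t ⟨ht, hxt⟩ t' ⟨ht', hxt'⟩ (h : t (Fin.last n) = t' (Fin.last n))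
  have mem_cube : ∀ t, x ∈ Cube (Fin.init t) → Fin.snoc x (t (Fin.last n)) ∈ Cube t :=
    fun t hx => (snoc_mem_cube_iff _ _ _).mpr ⟨hx, le_rfl, lt_add_one _⟩
  exact (isCubeTiling_iff.mp hT _).unique ⟨ht, mem_cube t hxt⟩ ⟨ht', h ▸ mem_cube t' hxt'⟩

lemma existsUnique_code_eq {α : Type*} {e : ℝ → α}
    (he : ∀ s, Set.BijOn e {y | ∃ m : ℤ, y = s + m} Set.univ)
    (hT : IsCubeTiling T) (a : α) (x : Fin n → ℝ) :
    ∃! t, (t ∈ T ∧ x ∈ Cube (Fin.init t)) ∧ e (t (Fin.last n)) = a := by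
  have hS := hT.isCubeTiling1_last_image x
  obtain ⟨_, ⟨s, hs, rfl⟩, -⟩ := hS.exists_mem_s15 0
  have hbij : Set.BijOn (e ∘ fun t => t (Fin.last n)) {t ∈ T | x ∈ Cube (Fin.init t)} Set.univ :=
    (hS.eq_coset ⟨s, hs, rfl⟩ ▸ he _).comp (hT.injOn_last x).bijOn_image
  obtain ⟨t, ht, hta⟩ := hbij.surjOn (Set.mem_univ a)
  exact ⟨t, ⟨ht, hta⟩, fun t' ⟨ht', ht'a⟩ => hbij.injOn ht' ht (ht'a.trans hta.symm)⟩

end IsCubeTiling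

theorem projection_of_code_slice_tiling_general {n : ℕ}
    (ε : Fin (n + 1) → ℝ → ℕ+) (hε : IsNaturalCode ε)
    (T : Set (Fin (n + 1) → ℝ)) (hT : IsCubeTiling T) (k : ℕ+) :
    IsCubeTiling
      ((fun t : Fin (n + 1) → ℝ => Fin.init t) ''
        {t ∈ T | ε (Fin.last n) (t (Fin.last n)) = k}) := by
  refine isCubeTiling_iff.mpr fun x => ?_
  obtain ⟨t, ⟨⟨ht, hxt⟩, htk⟩, huniq⟩ := hT.existsUnique_code_eq (hε (Fin.last n)) k x
  refine ⟨Fin.init t, ⟨⟨t, ⟨ht, htk⟩, rfl⟩, hxt⟩, ?_⟩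
  rintro _ ⟨⟨t', ⟨ht', ht'k⟩, rfl⟩, hxt'⟩
  rw [huniq t' ⟨⟨ht', hxt'⟩, ht'k⟩]

/-- For a cube tiling of `ℝⁿ` (`n ≥ 2`) with a natural code, the projection of
`Tᵏ = {t ∈ T : εₙ(tₙ) = k}` onto the first `n − 1` coordinates determines a
cube tiling of `ℝⁿ⁻¹`. -/
theorem projection_of_code_slice_tiling {n : ℕ} (hn : 1 ≤ n)
    (ε : Fin (n + 1) → ℝ → ℕ+) (hε : IsNaturalCode ε)
    (T : Set (Fin (n + 1) → ℝ)) (hT : IsCubeTiling T) (k : ℕ+) :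
    IsCubeTiling
      ((fun t : Fin (n + 1) → ℝ => Fin.init t) ''
        {t ∈ T | ε (Fin.last n) (t (Fin.last n)) = k}) :=
  projection_of_code_slice_tiling_general ε hε T hT k
end
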